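/- arXiv:2506.23047 — 3 statements merged into one kernel-verified Lean document; each statement's English description precedes it below -/
import Mathlib

section
/- Let G be a graph. The graph semiring S_G satisfies the identity c_n ≈ x³ for every integer n ≥ 1 if and only if G is acyclic. -/
universe u

-- The underlying set of the graph semiring of a graph with vertex set `V`:
-- the vertices together with two extra elements `0` and `ω`.
inductive GS (V : Type u) : Type u where
  | zero : GS V
  | omega : GS V
  | vert : V → GS V

-- Multiplication of the graph semiring: `x·y = ω` if `x, y` are vertices joined by an
-- edge, and `x·y = 0` otherwise.
open Classical in
noncomputable def gsMul {V : Type u} (E : V → V → Prop) : GS V → GS V → GS V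
  | GS.vert a, GS.vert b => if E a b then GS.omega else GS.zero
  | _, _ => GS.zero

-- The flat addition of the graph semiring: `a + b = a` if `a = b`, else `0`.
open Classical in
noncomputable def gsAdd {V : Type u} (a b : GS V) : GS V :=
  if a = b then a else GS.zero

-- `gsSum f n = f 0 + f 1 + ⋯ + f n` (a sum of `n + 1` terms).
noncomputable def gsSum {V : Type u} (f : ℕ → GS V) : ℕ → GS V
  | 0 => f 0
  | n + 1 => gsAdd (gsSum f n) (f (n + 1))

-- `E` is a graph (in the sense of the paper): a directed graph with no isolated
-- vertices in which every vertex has out-degree at most 1 and in-degree at most 1.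
def IsGraph {V : Type u} (E : V → V → Prop) : Prop :=
  (∀ v : V, ∃ u : V, E v u ∨ E u v) ∧
  (∀ v a b : V, E v a → E v b → a = b) ∧
  (∀ v a b : V, E a v → E b v → a = b)

-- `v 0, v 1, …, v (m - 1)` is a path of the graph `E` with `m` vertices.
def IsPathOn {V : Type u} (E : V → V → Prop) (m : ℕ) (v : ℕ → V) : Prop :=
  (∀ i < m, ∀ j < m, v i = v j → i = j) ∧
  (∀ i : ℕ, i + 1 < m → E (v i) (v (i + 1)))

-- `v 0, v 1, …, v (m - 1)` is a cycle of the graph `E` of length `m`.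
def IsCycleOn {V : Type u} (E : V → V → Prop) (m : ℕ) (v : ℕ → V) : Prop :=
  1 ≤ m ∧
  (∀ i < m, ∀ j < m, v i = v j → i = j) ∧
  (∀ i : ℕ, i + 1 < m → E (v i) (v (i + 1))) ∧
  E (v (m - 1)) (v 0)

-- The graph semiring of `E` satisfies the identity `c_n ≈ x³`: for all
-- `x, x_1, …, x_n` one has `x_1x_2 + x_2x_3 + ⋯ + x_{n-1}x_n + x_nx_1 = x·x·x`.
def satCx3 {V : Type u} (E : V → V → Prop) (n : ℕ) : Prop :=
  ∀ (x : GS V) (g : ℕ → GS V),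
    gsSum (fun i => gsMul E (g i) (g ((i + 1) % n))) (n - 1) =
      gsMul E (gsMul E x x) x

/-! A cycle `v_1, …, v_m` gives the assignment `x_i = v_i` making every term of `c_m` equal
to `ω`, so `c_m` evaluates to `ω`, while `x³` is always `0`. Conversely, if some `c_n` is
nonzero then every term `x_i x_{i+1}` is `ω`, so the `x_i` form a closed walk; since
out-degrees are at most one, a closed walk winds around a cycle. -/

lemma gsMul_gsMul_self_eq_zero {V : Type u} (E : V → V → Prop) (x : GS V) :
    gsMul E (gsMul E x x) x = GS.zero := by
  cases x with
  | zero | omega => rfl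
  | vert a => by_cases hE : E a a <;> simp [gsMul, hE]

lemma gsSum_eq_of_forall_eq {V : Type u} {f : ℕ → GS V} {c : GS V} :
    ∀ k, (∀ i ≤ k, f i = c) → gsSum f k = c
  | 0, h => h 0 le_rfl
  | k + 1, h => by
    rw [gsSum, gsSum_eq_of_forall_eq k fun i hi => h i (hi.trans k.le_succ), h (k + 1) le_rfl]
    simp [gsAdd]

lemma apply_ne_zero_of_gsSum_ne_zero {V : Type u} {f : ℕ → GS V} :
    ∀ k, gsSum f k ≠ GS.zero → ∀ i ≤ k, f i ≠ GS.zero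
  | 0, h, i, hi => by rwa [Nat.le_zero.mp hi]
  | k + 1, h, i, hi => by
    rw [gsSum, gsAdd] at h
    split_ifs at h with heq
    · rcases Nat.le_succ_iff.mp hi with hi | rfl
      · exact apply_ne_zero_of_gsSum_ne_zero k h i hi
      · rwa [← heq]
    · exact absurd rfl h

lemma exists_vert_of_gsMul_ne_zero {V : Type u} {E : V → V → Prop} {a b : GS V}
    (h : gsMul E a b ≠ GS.zero) : ∃ x y, a = GS.vert x ∧ b = GS.vert y ∧ E x y := by
  cases a <;> cases b <;> try exact absurd rfl h
  rename_i x y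
  exact ⟨x, y, rfl, rfl, by_contra fun hE => h (by simp [gsMul, hE])⟩

lemma IsCycleOn.adj_mod {V : Type u} {E : V → V → Prop} {m : ℕ} {v : ℕ → V}
    (hv : IsCycleOn E m v) (i : ℕ) : E (v (i % m)) (v ((i + 1) % m)) := by
  obtain ⟨hm, -, hadj, hlast⟩ := hv
  have hlt : i % m < m := Nat.mod_lt i hm
  rw [← Nat.mod_add_mod]
  rcases Nat.lt_or_ge (i % m + 1) m with h | h
  · rw [Nat.mod_eq_of_lt h]
    exact hadj _ h
  · rwa [show i % m = m - 1 by omega, Nat.sub_add_cancel hm, Nat.mod_self]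

lemma not_satCx3_of_isCycleOn {V : Type u} {E : V → V → Prop} {m : ℕ} {v : ℕ → V}
    (hv : IsCycleOn E m v) : ¬ satCx3 E m := by
  intro hsat
  have h := hsat GS.zero fun i => GS.vert (v (i % m))
  rw [gsMul_gsMul_self_eq_zero, gsSum_eq_of_forall_eq (c := GS.omega)] at h
  · cases h
  · intro i _
    simp [gsMul, hv.adj_mod i]

lemma exists_closed_walk_of_gsSum_ne_zero {V : Type u} {E : V → V → Prop} {n : ℕ}
    (hn : 1 ≤ n) {g : ℕ → GS V}
    (h : gsSum (fun i => gsMul E (g i) (g ((i + 1) % n))) (n - 1) ≠ GS.zero) :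
    ∃ w : ℕ → V, (∀ i, E (w i) (w (i + 1))) ∧ w n = w 0 := by
  have hterm (i : ℕ) := exists_vert_of_gsMul_ne_zero <|
    apply_ne_zero_of_gsSum_ne_zero _ h (i % n) (by have := Nat.mod_lt i hn; omega)
  choose w w' hw hw' hE using hterm
  refine ⟨w, fun i => ?_, GS.vert.inj (by rw [← hw, ← hw, Nat.mod_self, Nat.zero_mod])⟩
  convert hE i using 1
  apply GS.vert.inj
  rw [← hw', ← hw, Nat.mod_add_mod]

lemma eq_add_of_eq_of_adj {V : Type u} {E : V → V → Prop}
    (hout : ∀ v a b : V, E v a → E v b → a = b) {u : ℕ → V} (hu : ∀ i, E (u i) (u (i + 1)))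
    {i j : ℕ} (hij : u i = u j) : ∀ k, u (i + k) = u (j + k)
  | 0 => hij
  | k + 1 => hout _ _ _ (hu (i + k)) (eq_add_of_eq_of_adj hout hu hij k ▸ hu (j + k))

lemma exists_isCycleOn_of_closed_walk {V : Type u} {E : V → V → Prop}
    (hout : ∀ v a b : V, E v a → E v b → a = b) {u : ℕ → V} (hu : ∀ i, E (u i) (u (i + 1)))
    {n : ℕ} (hn : 1 ≤ n) (hret : u n = u 0) : ∃ m v, IsCycleOn E m v := by
  classical
  have hex : ∃ k, 1 ≤ k ∧ u k = u 0 := ⟨n, hn, hret⟩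
  obtain ⟨hm, hmret⟩ := Nat.find_spec hex
  set m := Nat.find hex
  -- A repetition `u i = u j` with `i < j < m` would make the walk return to `u 0` at
  -- time `i + (m - j) < m`.
  have hinj (i j : ℕ) (hij : i < j) (hj : j < m) (heq : u i = u j) : False := by
    have hback := eq_add_of_eq_of_adj hout hu heq (m - j)
    rw [Nat.add_sub_cancel' hj.le, hmret] at hback
    exact Nat.find_min hex (show i + (m - j) < m by omega) ⟨by omega, hback⟩
  refine ⟨m, u, hm, fun i hi j hj heq => ?_, fun i _ => hu i, ?_⟩
  · rcases Nat.lt_trichotomy i j with h | h | h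
    · exact (hinj i j h hj heq).elim
    · exact h
    · exact (hinj j i h hi heq.symm).elim
  · simpa [Nat.sub_add_cancel hm, hmret] using hu (m - 1)

/-- The graph semiring of a graph `E` satisfies `c_n ≈ x³` for every
`n ≥ 1` iff the graph is acyclic. -/
theorem stmt_14 {V : Type u} (E : V → V → Prop) (hG : IsGraph E) :
    (∀ n : ℕ, 1 ≤ n → satCx3 E n) ↔
      ¬ ∃ (m : ℕ) (v : ℕ → V), IsCycleOn E m v := by
  constructor
  · rintro hsat ⟨m, v, hv⟩
    exact not_satCx3_of_isCycleOn hv (hsat m hv.1)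
  · intro hacyclic n hn x g
    rw [gsMul_gsMul_self_eq_zero]
    by_contra h
    obtain ⟨w, hw, hret⟩ := exists_closed_walk_of_gsSum_ne_zero hn h
    exact hacyclic (exists_isCycleOn_of_closed_walk hG.2.1 hw hn hret)
end

section
/- Let m ≥ 2 be an integer and let G be a graph. The graph semiring S_G satisfies the identity p_m ≈ x³ if and only if G is acyclic and contains no path with m vertices. -/
universe u

-- The graph semiring of `E` satisfies the identity `p_m ≈ x³`: for all
-- `x, x_1, …, x_m` one has `x_1x_2 + x_2x_3 + ⋯ + x_{m-1}x_m = x·x·x`.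
def satPx3 {V : Type u} (E : V → V → Prop) (m : ℕ) : Prop :=
  ∀ (x : GS V) (g : ℕ → GS V),
    gsSum (fun i => gsMul E (g i) (g (i + 1))) (m - 2) =
      gsMul E (gsMul E x x) x

section Aux
universe v
variable {V : Type v} (E : V → V → Prop)

lemma gsMul_eq_omega {a b : GS V} :
    gsMul E a b = GS.omega ↔ ∃ x y, a = GS.vert x ∧ b = GS.vert y ∧ E x y := by
  cases a <;> cases b <;> simp [gsMul] <;> tauto

lemma gsMul_zero_or_omega (a b : GS V) :
    gsMul E a b = GS.zero ∨ gsMul E a b = GS.omega := by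
  cases a <;> cases b <;> simp [gsMul] <;> tauto

lemma gsAdd_eq_omega {a b : GS V} :
    gsAdd a b = GS.omega ↔ a = GS.omega ∧ b = GS.omega := by
  unfold gsAdd
  split_ifs with h
  · subst h; simp
  · constructor
    · intro hc; exact absurd hc (by simp)
    · rintro ⟨rfl, rfl⟩; exact absurd rfl h

lemma gsAdd_zero_or_omega {a b : GS V}
    (ha : a = GS.zero ∨ a = GS.omega) (hb : b = GS.zero ∨ b = GS.omega) :
    gsAdd a b = GS.zero ∨ gsAdd a b = GS.omega := by
  unfold gsAdd; split_ifs <;> tauto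

lemma gsSum_eq_omega {f : ℕ → GS V} : ∀ n : ℕ,
    gsSum f n = GS.omega ↔ ∀ i ≤ n, f i = GS.omega := by
  intro n
  induction n with
  | zero =>
      simp only [gsSum]
      constructor
      · intro h i hi; obtain rfl := Nat.le_zero.mp hi; exact h
      · intro h; exact h 0 le_rfl
  | succ n ih =>
      rw [gsSum, gsAdd_eq_omega, ih]
      constructor
      · rintro ⟨h1, h2⟩ i hi
        rcases Nat.lt_or_ge i (n+1) with h | h
        · exact h1 i (by omega)
        · have : i = n + 1 := by omega
          subst this; exact h2
      · intro h
        exact ⟨fun i hi => h i (by omega), h (n+1) le_rfl⟩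

lemma gsSum_zero_or_omega {f : ℕ → GS V} (n : ℕ)
    (hf : ∀ i ≤ n, f i = GS.zero ∨ f i = GS.omega) :
    gsSum f n = GS.zero ∨ gsSum f n = GS.omega := by
  induction n with
  | zero => exact hf 0 le_rfl
  | succ n ih =>
      rw [gsSum]
      exact gsAdd_zero_or_omega (ih fun i hi => hf i (by omega)) (hf (n+1) le_rfl)

lemma cube_zero (x : GS V) : gsMul E (gsMul E x x) x = GS.zero := by
  rcases gsMul_zero_or_omega E x x with h | h <;> rw [h] <;> cases x <;> simp [gsMul]

end Aux

/-- For `m ≥ 2`, the graph semiring of a graph `E` satisfies `p_m ≈ x³`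
iff the graph is acyclic and contains no path with `m` vertices. -/
theorem stmt_16 {V : Type u} (E : V → V → Prop) (hG : IsGraph E)
    (m : ℕ) (hm : 2 ≤ m) :
    satPx3 E m ↔
      (¬ ∃ (k : ℕ) (v : ℕ → V), IsCycleOn E k v) ∧
      (¬ ∃ v : ℕ → V, IsPathOn E m v) := by

  obtain ⟨n, rfl⟩ : ∃ n, m = n + 2 := ⟨m - 2, by omega⟩
  have key : satPx3 E (n+2) ↔ ¬ ∃ v : ℕ → V, ∀ i ≤ n, E (v i) (v (i+1)) := by
    constructor
    · rintro h ⟨v, hv⟩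
      have h0 := h GS.zero (fun i => GS.vert (v i))
      rw [cube_zero] at h0
      simp only [Nat.add_sub_cancel] at h0
      have hom : gsSum (fun i => gsMul E (GS.vert (v i)) (GS.vert (v (i+1)))) n = GS.omega :=
        (gsSum_eq_omega n).mpr (fun i hi => (gsMul_eq_omega E).mpr ⟨v i, v (i+1), rfl, rfl, hv i hi⟩)
      rw [h0] at hom
      exact absurd hom (by simp)
    · intro h x g
      rw [cube_zero]
      simp only [Nat.add_sub_cancel]
      rcases gsSum_zero_or_omega (f := fun i => gsMul E (g i) (g (i+1))) n
          (fun i _ => gsMul_zero_or_omega E _ _) with h0 | hom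
      · exact h0
      · exfalso
        have hall := (gsSum_eq_omega n).mp hom
        obtain ⟨x0, y0, hg0, _, _⟩ := (gsMul_eq_omega E).mp (hall 0 (Nat.zero_le n))
        refine h ⟨fun i => match g i with | GS.vert a => a | _ => x0, fun i hi => ?_⟩
        obtain ⟨a, b, ha, hb, hab⟩ := (gsMul_eq_omega E).mp (hall i hi)
        simp only [ha, hb]
        exact hab
  rw [key]
  constructor
  · intro hw
    constructor
    · rintro ⟨k, v, hk, hinj, hedge, hclose⟩
      apply hw
      rcases Nat.lt_or_ge k 2 with hk2 | hk2
      · -- k = 1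
        have hk1 : k = 1 := by omega
        subst hk1
        exact ⟨fun _ => v 0, fun i _ => hclose⟩
      · refine ⟨fun i => v (i % k), fun i _ => ?_⟩
        show E (v (i % k)) (v ((i+1) % k))
        have hlt : i % k < k := Nat.mod_lt _ (by omega)
        rcases Nat.lt_or_ge (i % k + 1) k with h | h
        · have e : (i+1) % k = i % k + 1 := by
            conv_lhs => rw [Nat.add_mod]
            rw [Nat.mod_eq_of_lt (by omega : 1 < k), Nat.mod_eq_of_lt h]
          rw [e]; exact hedge _ h
        · have hik : i % k = k - 1 := by omega
          have e : (i+1) % k = 0 := by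
            conv_lhs => rw [Nat.add_mod]
            rw [Nat.mod_eq_of_lt (by omega : 1 < k), hik,
              Nat.sub_add_cancel (by omega : 1 ≤ k), Nat.mod_self]
          rw [e, hik]
          exact hclose
    · rintro ⟨v, hinj, hedge⟩
      exact hw ⟨v, fun i hi => hedge i (by omega)⟩
  · rintro ⟨hc, hp⟩ ⟨v, hv⟩
    by_cases hinj : ∀ i < n+2, ∀ j < n+2, v i = v j → i = j
    · exact hp ⟨v, hinj, fun i hi => hv i (by omega)⟩
    · push_neg at hinj
      obtain ⟨i, hi, j, hj, hij, hne⟩ := hinj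
      classical
      have hex : ∃ d, 0 < d ∧ ∃ p, p + d ≤ n + 1 ∧ v p = v (p + d) := by
        rcases Nat.lt_or_ge i j with h | h
        · exact ⟨j - i, by omega, i, by omega, by rw [show i + (j-i) = j by omega]; exact hij⟩
        · exact ⟨i - j, by omega, j, by omega, by rw [show j + (i-j) = i by omega]; exact hij.symm⟩
      obtain ⟨hd0, p, hpd, hvp⟩ := Nat.find_spec hex
      set d := Nat.find hex with hdd
      have hmin : ∀ d' < d, ¬ (0 < d' ∧ ∃ p, p + d' ≤ n + 1 ∧ v p = v (p + d')) :=
        fun d' h => Nat.find_min hex h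
      apply hc
      refine ⟨d, fun t => v (p + t), hd0, ?_, ?_, ?_⟩
      · intro a ha b hb hab
        by_contra hne2
        rcases Nat.lt_or_ge a b with h | h
        · exact hmin (b - a) (by omega)
            ⟨by omega, p + a, by omega, by rw [show p+a+(b-a) = p+b by omega]; exact hab⟩
        · have h' : b < a := by omega
          exact hmin (a - b) (by omega)
            ⟨by omega, p + b, by omega, by rw [show p+b+(a-b) = p+a by omega]; exact hab.symm⟩
      · intro t ht
        have h2 := hv (p + t) (by omega)
        rw [show p + t + 1 = p + (t+1) by omega] at h2
        exact h2
      · have h1 : E (v (p + d - 1)) (v (p + d)) := by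
          have h2 := hv (p + d - 1) (by omega)
          rw [show p + d - 1 + 1 = p + d by omega] at h2
          exact h2
        rw [← hvp] at h1
        show E (v (p + (d - 1))) (v (p + 0))
        rw [show p + (d - 1) = p + d - 1 by omega]
        simpa using h1
end

section
/- Let m, n ≥ 2 be integers. The graph semiring of the disjoint union of m cycles of length n (the {0, ω}-direct union of m copies of S_{c_n}) is a homomorphic image of a subsemiring of the m-th direct power S_{c_n}^m. -/
universe u v

-- `B` (with operations `addB`, `mulB`) is a homomorphic image of a subsemiring of `A`
-- (with operations `addA`, `mulA`): there is a subset of `A` closed under both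
-- operations and a surjection from it onto `B` preserving both operations.
def IsHomImageOfSub {A : Type u} {B : Type v}
    (addA mulA : A → A → A) (addB mulB : B → B → B) : Prop :=
  ∃ (T : Set A) (φ : A → B),
    (∀ x ∈ T, ∀ y ∈ T, addA x y ∈ T ∧ mulA x y ∈ T) ∧
    (∀ b : B, ∃ x ∈ T, φ x = b) ∧
    (∀ x ∈ T, ∀ y ∈ T,
      φ (addA x y) = addB (φ x) (φ y) ∧ φ (mulA x y) = mulB (φ x) (φ y))

-- The edge relation of the cycle with vertex set `ZMod n`: edges `(i, i + 1)`.
def cycleE (n : ℕ) : ZMod n → ZMod n → Prop := fun i j => j = i + 1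

-- The edge relation of the disjoint union of `m` cycles of length `n`.
def unionCyclesE (m n : ℕ) : Fin m × ZMod n → Fin m × ZMod n → Prop :=
  fun p q => p.1 = q.1 ∧ q.2 = p.2 + 1

/-!
Send the vertex `(k, i)` of the `k`-th cycle to the staircase `j ↦ i + [j < k]` in the power.
A staircase determines its step `k` and its level `i`, so two staircases are coordinatewise
adjacent in `c_n` exactly when they come from adjacent vertices of one cycle. The subsemiring
consists of the vectors that are staircases or have a coordinate outside the vertex set; the
map sending the all-`ω` vector to `ω`, each staircase to its vertex and everything else to `0`
is a homomorphism, since a sum of two distinct vectors and every product have a coordinate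
outside the vertex set.
-/

open Function

section GraphSemiring

variable {V : Type*}

theorem GS.vert_injective : Injective (@GS.vert V) := fun _ _ => GS.vert.inj

theorem gsAdd_self (a : GS V) : gsAdd a a = a := if_pos rfl

theorem gsAdd_of_ne {a b : GS V} (h : a ≠ b) : gsAdd a b = GS.zero := if_neg h

theorem eq_of_gsAdd_ne_zero {a b : GS V} (h : gsAdd a b ≠ GS.zero) : a = b :=
  not_not.mp (mt gsAdd_of_ne h)

theorem gsMul_ne_vert (E : V → V → Prop) (a b : GS V) (v : V) : gsMul E a b ≠ GS.vert v := by
  cases a <;> cases b <;> simp only [gsMul, ne_eq, reduceCtorEq, not_false_eq_true]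
  split_ifs <;> simp

theorem gsMul_eq_omega_iff {E : V → V → Prop} {a b : GS V} :
    gsMul E a b = GS.omega ↔ ∃ u v, a = GS.vert u ∧ b = GS.vert v ∧ E u v := by
  cases a <;> cases b <;> simp [gsMul]

theorem gsMul_eq_zero_of_ne_omega {E : V → V → Prop} {a b : GS V} (h : gsMul E a b ≠ GS.omega) :
    gsMul E a b = GS.zero := by
  cases a <;> cases b <;> simp_all [gsMul]

end GraphSemiring

section PowerEmbedding

variable {ι V W : Type*} (e : V → ι → W)

def liftClosed : Set (ι → GS W) := {x | ∀ w, x = GS.vert ∘ w → w ∈ Set.range e}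

open Classical in
noncomputable def decode (x : ι → GS W) : GS V :=
  if x = fun _ => GS.omega then GS.omega
  else if h : ∃ p, x = GS.vert ∘ e p then GS.vert h.choose else GS.zero

variable {e}

theorem ne_comp_vert {x : ι → GS W} {j : ι} (hj : ∀ v, x j ≠ GS.vert v) (w : ι → W) :
    x ≠ GS.vert ∘ w :=
  fun h => hj _ (congrFun h j)

theorem mem_liftClosed {x : ι → GS W} {j : ι} (hj : ∀ v, x j ≠ GS.vert v) :
    x ∈ liftClosed e :=
  fun w h => absurd h (ne_comp_vert hj w)

theorem decode_const_omega : decode e (fun _ : ι => GS.omega) = GS.omega := if_pos rfl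

theorem decode_comp_vert [Nonempty ι] (he : Injective e) (p : V) :
    decode e (GS.vert ∘ e p) = GS.vert p := by
  have hp : ∃ q, GS.vert ∘ e p = GS.vert ∘ e q := ⟨p, rfl⟩
  rw [decode, if_neg (ne_comp_vert (j := Classical.arbitrary ι) (by simp) _).symm, dif_pos hp]
  exact congrArg GS.vert (he (GS.vert_injective.comp_left hp.choose_spec)).symm

theorem decode_eq_zero {x : ι → GS W} {j : ι} (hj : ∀ v, x j ≠ GS.vert v)
    (hω : x ≠ fun _ => GS.omega) : decode e x = GS.zero := by
  rw [decode, if_neg hω, dif_neg]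
  rintro ⟨p, hp⟩
  exact ne_comp_vert hj _ hp

theorem eq_of_decode_eq_vert {x : ι → GS W} {p : V} (h : decode e x = GS.vert p) :
    x = GS.vert ∘ e p := by
  unfold decode at h
  split_ifs at h with _ hx
  cases h
  exact hx.choose_spec

theorem eq_of_decode_eq_omega {x : ι → GS W} (h : decode e x = GS.omega) :
    x = fun _ => GS.omega := by
  unfold decode at h
  split_ifs at h with hω
  exact hω

theorem eq_of_decode_eq {x y : ι → GS W} (h : decode e x = decode e y)
    (h0 : decode e x ≠ GS.zero) : x = y := by
  rcases hx : decode e x with _ | _ | p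
  · exact absurd hx h0
  · rw [eq_of_decode_eq_omega hx, eq_of_decode_eq_omega (h.symm.trans hx)]
  · rw [eq_of_decode_eq_vert hx, eq_of_decode_eq_vert (h.symm.trans hx)]

variable {EV : V → V → Prop} {EW : W → W → Prop}

theorem mul_eq_const_omega_iff [Nonempty ι] (he : Injective e)
    (hE : ∀ p q, (∀ j, EW (e p j) (e q j)) ↔ EV p q) {x y : ι → GS W}
    (hx : x ∈ liftClosed e) (hy : y ∈ liftClosed e) :
    (fun j => gsMul EW (x j) (y j)) = (fun _ => GS.omega) ↔
      gsMul EV (decode e x) (decode e y) = GS.omega := by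
  constructor
  · intro h
    choose w w' hw using fun j => gsMul_eq_omega_iff.mp (congrFun h j)
    have hxw : x = GS.vert ∘ w := funext fun j => (hw j).1
    have hyw : y = GS.vert ∘ w' := funext fun j => (hw j).2.1
    obtain ⟨p, rfl⟩ := hx w hxw
    obtain ⟨q, rfl⟩ := hy w' hyw
    rw [hxw, hyw, decode_comp_vert he, decode_comp_vert he]
    exact gsMul_eq_omega_iff.mpr ⟨p, q, rfl, rfl, (hE p q).mp fun j => (hw j).2.2⟩
  · intro h
    obtain ⟨p, q, hp, hq, hpq⟩ := gsMul_eq_omega_iff.mp h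
    rw [eq_of_decode_eq_vert hp, eq_of_decode_eq_vert hq]
    exact funext fun j => gsMul_eq_omega_iff.mpr ⟨_, _, rfl, rfl, (hE p q).mpr hpq j⟩

theorem isHomImageOfSub_pi_of_embedding [Nonempty ι] (he : Injective e)
    (hE : ∀ p q, (∀ j, EW (e p j) (e q j)) ↔ EV p q) :
    IsHomImageOfSub
      (fun x y : ι → GS W => fun j => gsAdd (x j) (y j))
      (fun x y : ι → GS W => fun j => gsMul EW (x j) (y j))
      (gsAdd : GS V → GS V → GS V) (gsMul EV) := by
  refine ⟨liftClosed e, decode e, fun x hx y hy => ⟨?_, ?_⟩, ?_, fun x hx y hy => ⟨?_, ?_⟩⟩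
  · intro w hw
    have hxy : x = y := funext fun j => eq_of_gsAdd_ne_zero (by simp [congrFun hw j])
    subst hxy
    exact hx w (funext fun j => by simpa [gsAdd_self] using congrFun hw j)
  · exact mem_liftClosed (j := Classical.arbitrary ι) (gsMul_ne_vert _ _ _)
  · obtain ⟨j⟩ : Nonempty ι := inferInstance
    rintro (_ | _ | p)
    · exact ⟨fun _ => GS.zero, mem_liftClosed (j := j) (by simp),
        decode_eq_zero (j := j) (by simp) fun h => by simpa using congrFun h j⟩
    · exact ⟨fun _ => GS.omega, mem_liftClosed (j := j) (by simp), decode_const_omega⟩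
    · exact ⟨GS.vert ∘ e p, fun w hw => ⟨p, GS.vert_injective.comp_left hw⟩, decode_comp_vert he p⟩
  · dsimp only
    by_cases hxy : x = y
    · subst hxy
      simp only [gsAdd_self]
    obtain ⟨j, hj⟩ := Function.ne_iff.mp hxy
    rw [decode_eq_zero (j := j) (by simp [gsAdd_of_ne hj])
      fun h => by simpa [gsAdd_of_ne hj] using congrFun h j]
    by_cases hd : decode e x = decode e y
    · have hx0 : decode e x = GS.zero := by_contra fun h0 => hxy (eq_of_decode_eq hd h0)
      rw [← hd, hx0, gsAdd_self]
    · exact (gsAdd_of_ne hd).symm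
  · dsimp only
    have hmul := mul_eq_const_omega_iff he hE hx hy
    by_cases hω : (fun j => gsMul EW (x j) (y j)) = fun _ => GS.omega
    · rw [hω, decode_const_omega, hmul.mp hω]
    · rw [decode_eq_zero (j := Classical.arbitrary ι) (gsMul_ne_vert _ _ _) hω,
        gsMul_eq_zero_of_ne_omega (mt hmul.mpr hω)]

end PowerEmbedding

theorem add_ite_lt_eq_add_ite_lt_iff {R α : Type*} [AddGroupWithOne R] [NeZero (1 : R)]
    [LinearOrder α] {a b : α} {c d : R} :
    (∀ j, c + (if j < a then 1 else 0) = d + (if j < b then 1 else 0)) ↔ a = b ∧ c = d := by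
  refine ⟨fun h => ?_, by rintro ⟨rfl, rfl⟩ _; rfl⟩
  have ha := h a
  have hb := h b
  rcases lt_trichotomy a b with hab | rfl | hab
  · simp only [lt_irrefl, hab, not_lt_of_gt hab, if_true, if_false, add_zero] at ha hb
    exact absurd (hb.symm.trans ha) (by simp)
  · simpa using ha
  · simp only [lt_irrefl, hab, not_lt_of_gt hab, if_true, if_false, add_zero] at ha hb
    exact absurd (ha.trans hb.symm) (by simp)

def cycleStairs (m n : ℕ) (p : Fin m × ZMod n) (j : Fin m) : ZMod n :=
  p.2 + if j < p.1 then 1 else 0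

section

variable {m n : ℕ} [Fact (1 < n)]

theorem cycleStairs_injective : Injective (cycleStairs m n) := fun _ _ h =>
  Prod.ext_iff.mpr (add_ite_lt_eq_add_ite_lt_iff.mp (congrFun h))

theorem forall_cycleE_cycleStairs_iff (p q : Fin m × ZMod n) :
    (∀ j, cycleE n (cycleStairs m n p j) (cycleStairs m n q j)) ↔ unionCyclesE m n p q := by
  simp only [cycleE, cycleStairs, unionCyclesE, add_right_comm _ _ (1 : ZMod n)]
  rw [add_ite_lt_eq_add_ite_lt_iff, eq_comm (a := q.1)]

end

/-- For `m, n ≥ 2`, the graph semiring of the disjoint union of `m`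
cycles of length `n` (the `{0, ω}`-direct union of `m` copies of `S_{c_n}`) is a
homomorphic image of a subsemiring of the `m`-th direct power `S_{c_n}^m`. -/
theorem stmt_18 (m n : ℕ) (hm : 2 ≤ m) (hn : 2 ≤ n) :
    IsHomImageOfSub
      (fun f g : Fin m → GS (ZMod n) => fun i => gsAdd (f i) (g i))
      (fun f g : Fin m → GS (ZMod n) => fun i => gsMul (cycleE n) (f i) (g i))
      (gsAdd : GS (Fin m × ZMod n) → GS (Fin m × ZMod n) → GS (Fin m × ZMod n))
      (gsMul (unionCyclesE m n)) := by
  have : Fact (1 < n) := ⟨hn⟩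
  have : Nonempty (Fin m) := ⟨⟨0, by omega⟩⟩
  exact isHomImageOfSub_pi_of_embedding cycleStairs_injective forall_cycleE_cycleStairs_iff
end
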